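/- arXiv:2412.11089 — 3 statements merged into one kernel-verified Lean document; each statement's English description precedes it below -/
import Mathlib

section
/- For positive constants $m_1, m_2, \epsilon$, the system $\frac{m_2}{((q_1-1/2)^2+q_2^2)^{3/2}} = \frac{m_1}{((q_1+1/2)^2+q_2^2)^{3/2}} = \frac{\epsilon}{2}$ with $q_2 \neq 0$ has exactly two solutions, provided $(2m_1/\epsilon)^{2/3} > (q_1+1/2)^2$; here $q_1$ is determined by $(q_1+1/2)^2 - (q_1-1/2)^2 = (2m_1/\epsilon)^{2/3} - (2m_2/\epsilon)^{2/3}$, i.e. $q_1 = \frac{(2m_1/\epsilon)^{2/3} - (2m_2/\epsilon)^{2/3}}{2}$, and $q_2 = \pm\sqrt{(2m_1/\epsilon)^{2/3} - (q_1+1/2)^2}$. -/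
open Real

lemma lagrange_key (m ε x : ℝ) (hm : 0 < m) (hε : 0 < ε) (hx : 0 < x) :
    m / x ^ ((3 : ℝ) / 2) = ε / 2 ↔ x = (2 * m / ε) ^ ((2 : ℝ) / 3) := by
  have hxp : (0 : ℝ) < x ^ ((3 : ℝ) / 2) := Real.rpow_pos_of_pos hx _
  constructor
  · intro h
    have h32 : x ^ ((3 : ℝ) / 2) = 2 * m / ε := by
      field_simp at h ⊢
      linarith
    have : x = (x ^ ((3 : ℝ) / 2)) ^ ((2 : ℝ) / 3) := by
      rw [← Real.rpow_mul hx.le]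
      norm_num
    rw [this, h32]
  · intro h
    have h32 : x ^ ((3 : ℝ) / 2) = 2 * m / ε := by
      rw [h, ← Real.rpow_mul (by positivity)]
      norm_num
    rw [h32]
    field_simp

/-- Off-axis critical points of the Lagrange potential: the system
`m₂/((q₁-1/2)²+q₂²)^(3/2) = m₁/((q₁+1/2)²+q₂²)^(3/2) = ε/2` with `q₂ ≠ 0`
has exactly the two solutions described. -/
theorem lagrange_offaxis_critical_points
    (m₁ m₂ ε : ℝ) (hm₁ : 0 < m₁) (hm₂ : 0 < m₂) (hε : 0 < ε)
    (a b : ℝ) (ha : a = (2 * m₁ / ε) ^ ((2 : ℝ) / 3))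
    (hb : b = (2 * m₂ / ε) ^ ((2 : ℝ) / 3))
    (q₁s : ℝ) (hq₁s : q₁s = (a - b) / 2)
    (hpos : (q₁s + 1 / 2) ^ 2 < a) :
    ∀ q₁ q₂ : ℝ, q₂ ≠ 0 →
      ((m₂ / ((q₁ - 1 / 2) ^ 2 + q₂ ^ 2) ^ ((3 : ℝ) / 2) = ε / 2 ∧
        m₁ / ((q₁ + 1 / 2) ^ 2 + q₂ ^ 2) ^ ((3 : ℝ) / 2) = ε / 2) ↔
       (q₁ = q₁s ∧
        (q₂ = Real.sqrt (a - (q₁s + 1 / 2) ^ 2) ∨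
         q₂ = -Real.sqrt (a - (q₁s + 1 / 2) ^ 2)))) := by
  intro q₁ q₂ hq₂
  have hq2sq : 0 < q₂ ^ 2 := by positivity
  have hRm : 0 < (q₁ - 1 / 2) ^ 2 + q₂ ^ 2 := by positivity
  have hRp : 0 < (q₁ + 1 / 2) ^ 2 + q₂ ^ 2 := by positivity
  have hs : 0 < a - (q₁s + 1 / 2) ^ 2 := by linarith
  constructor
  · rintro ⟨h2, h1⟩
    have e2 : (q₁ - 1 / 2) ^ 2 + q₂ ^ 2 = b := by
      rw [hb]; exact (lagrange_key m₂ ε _ hm₂ hε hRm).mp h2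
    have e1 : (q₁ + 1 / 2) ^ 2 + q₂ ^ 2 = a := by
      rw [ha]; exact (lagrange_key m₁ ε _ hm₁ hε hRp).mp h1
    have hq1 : q₁ = q₁s := by nlinarith
    refine ⟨hq1, ?_⟩
    have hq2 : q₂ ^ 2 = a - (q₁s + 1 / 2) ^ 2 := by rw [← hq1]; nlinarith
    have habs : |q₂| = Real.sqrt (a - (q₁s + 1 / 2) ^ 2) := by
      rw [← hq2, Real.sqrt_sq_eq_abs]
    rcases abs_cases q₂ with ⟨h, _⟩ | ⟨h, _⟩
    · left; rw [← h, habs]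
    · right; rw [← habs]; linarith
  · rintro ⟨hq1, hq2⟩
    have hq2sq' : q₂ ^ 2 = a - (q₁s + 1 / 2) ^ 2 := by
      rcases hq2 with h | h
      · rw [h, Real.sq_sqrt hs.le]
      · rw [h, neg_sq, Real.sq_sqrt hs.le]
    have hbpos : 0 < b := by rw [hb]; positivity
    have e1 : (q₁ + 1 / 2) ^ 2 + q₂ ^ 2 = a := by rw [hq1, hq2sq']; ring
    have e2 : (q₁ - 1 / 2) ^ 2 + q₂ ^ 2 = b := by rw [hq1, hq2sq']; nlinarith
    constructor
    · rw [e2, hb]; exact (lagrange_key m₂ ε _ hm₂ hε (hb ▸ hbpos)).mpr rfl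
    · rw [e1, ha]
      have hapos : 0 < a := by rw [ha]; positivity
      exact (lagrange_key m₁ ε _ hm₁ hε (ha ▸ hapos)).mpr rfl
end

section
/- Let $V(q) = -\frac{m_1}{\sqrt{(q_1+1/2)^2+q_2^2}} - \frac{m_2}{\sqrt{(q_1-1/2)^2+q_2^2}} - \frac{\epsilon}{2}(q_1^2+q_2^2)$ with $m_1, m_2, \epsilon > 0$. At any critical point $(q_1,q_2)$ with $q_2 \neq 0$, the determinant of the Hessian of $V$ equals $\frac{9 m_1 m_2 q_2^2}{((q_1+1/2)^2+q_2^2)^{5/2}((q_1-1/2)^2+q_2^2)^{5/2}} > 0$, and both diagonal entries of the Hessian are negative; hence the Hessian is negative definite and the critical point is a local maximum of $V$. -/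
set_option maxHeartbeats 1000000


open Real

private lemma lagrange_radial_max (m ε r r₀ : ℝ) (hε : 0 < ε) (hr : 0 < r) (hr₀ : 0 < r₀)
    (hm : m = ε / 2 * r₀ ^ 3) :
    -(m / r) - ε / 4 * r ^ 2 ≤ -(m / r₀) - ε / 4 * r₀ ^ 2 := by
  have hid : (-(m / r₀) - ε / 4 * r₀ ^ 2) - (-(m / r) - ε / 4 * r ^ 2)
      = ε * ((r - r₀) ^ 2 * (r + 2 * r₀)) / (4 * r) := by
    rw [hm]; field_simp; ring
  have h0 : (0:ℝ) ≤ ε * ((r - r₀) ^ 2 * (r + 2 * r₀)) / (4 * r) := by positivity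
  linarith

/-- At an off-axis critical point of the Lagrange problem, the Hessian of
`V = -U_ε` has positive determinant and negative diagonal entries, hence the
point is a local maximum of `V`. -/
theorem lagrange_offaxis_local_max
    (m₁ m₂ ε : ℝ) (hm₁ : 0 < m₁) (hm₂ : 0 < m₂) (hε : 0 < ε)
    (V : ℝ × ℝ → ℝ)
    (hV : ∀ q : ℝ × ℝ,
      V q = -(m₁ / Real.sqrt ((q.1 + 1 / 2) ^ 2 + q.2 ^ 2))
            - m₂ / Real.sqrt ((q.1 - 1 / 2) ^ 2 + q.2 ^ 2)
            - ε / 2 * (q.1 ^ 2 + q.2 ^ 2))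
    (q₁ q₂ : ℝ) (hq₂ : q₂ ≠ 0)
    (hcrit₁ : m₁ / ((q₁ + 1 / 2) ^ 2 + q₂ ^ 2) ^ ((3 : ℝ) / 2) = ε / 2)
    (hcrit₂ : m₂ / ((q₁ - 1 / 2) ^ 2 + q₂ ^ 2) ^ ((3 : ℝ) / 2) = ε / 2)
    -- the second partial derivatives of `V` at the critical point
    (Vxx Vyy Vxy : ℝ)
    (hVxx : Vxx = m₁ / ((q₁ + 1 / 2) ^ 2 + q₂ ^ 2) ^ ((3 : ℝ) / 2)
      - 3 * m₁ * (q₁ + 1 / 2) ^ 2 / ((q₁ + 1 / 2) ^ 2 + q₂ ^ 2) ^ ((5 : ℝ) / 2)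
      + m₂ / ((q₁ - 1 / 2) ^ 2 + q₂ ^ 2) ^ ((3 : ℝ) / 2)
      - 3 * m₂ * (q₁ - 1 / 2) ^ 2 / ((q₁ - 1 / 2) ^ 2 + q₂ ^ 2) ^ ((5 : ℝ) / 2) - ε)
    (hVyy : Vyy = m₁ / ((q₁ + 1 / 2) ^ 2 + q₂ ^ 2) ^ ((3 : ℝ) / 2)
      - 3 * m₁ * q₂ ^ 2 / ((q₁ + 1 / 2) ^ 2 + q₂ ^ 2) ^ ((5 : ℝ) / 2)
      + m₂ / ((q₁ - 1 / 2) ^ 2 + q₂ ^ 2) ^ ((3 : ℝ) / 2)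
      - 3 * m₂ * q₂ ^ 2 / ((q₁ - 1 / 2) ^ 2 + q₂ ^ 2) ^ ((5 : ℝ) / 2) - ε)
    (hVxy : Vxy = -(3 * m₁ * (q₁ + 1 / 2) * q₂) / ((q₁ + 1 / 2) ^ 2 + q₂ ^ 2) ^ ((5 : ℝ) / 2)
      - 3 * m₂ * (q₁ - 1 / 2) * q₂ / ((q₁ - 1 / 2) ^ 2 + q₂ ^ 2) ^ ((5 : ℝ) / 2)) :
    Vxx * Vyy - Vxy ^ 2 =
      9 * m₁ * m₂ * q₂ ^ 2 /
        (((q₁ + 1 / 2) ^ 2 + q₂ ^ 2) ^ ((5 : ℝ) / 2) *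
          ((q₁ - 1 / 2) ^ 2 + q₂ ^ 2) ^ ((5 : ℝ) / 2)) ∧
    0 < Vxx * Vyy - Vxy ^ 2 ∧ Vxx < 0 ∧ Vyy < 0 ∧
    IsLocalMax V (q₁, q₂) := by
  have hq2sq : 0 < q₂ ^ 2 := lt_of_le_of_ne (sq_nonneg _) (Ne.symm (pow_ne_zero 2 hq₂))
  set A : ℝ := (q₁ + 1 / 2) ^ 2 + q₂ ^ 2 with hAdef
  set B : ℝ := (q₁ - 1 / 2) ^ 2 + q₂ ^ 2 with hBdef
  have hA : 0 < A := by positivity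
  have hB : 0 < B := by positivity
  have ha3 : 0 < A ^ ((3:ℝ)/2) := Real.rpow_pos_of_pos hA _
  have hb3 : 0 < B ^ ((3:ℝ)/2) := Real.rpow_pos_of_pos hB _
  have ha5 : 0 < A ^ ((5:ℝ)/2) := Real.rpow_pos_of_pos hA _
  have hb5 : 0 < B ^ ((5:ℝ)/2) := Real.rpow_pos_of_pos hB _
  have ha53 : A ^ ((5:ℝ)/2) = A ^ ((3:ℝ)/2) * A := by
    rw [show (5:ℝ)/2 = 3/2 + 1 by norm_num, Real.rpow_add hA, Real.rpow_one]
  have hb53 : B ^ ((5:ℝ)/2) = B ^ ((3:ℝ)/2) * B := by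
    rw [show (5:ℝ)/2 = 3/2 + 1 by norm_num, Real.rpow_add hB, Real.rpow_one]
  have hm₁' : m₁ = ε / 2 * A ^ ((3:ℝ)/2) := by
    field_simp at hcrit₁; linarith
  have hm₂' : m₂ = ε / 2 * B ^ ((3:ℝ)/2) := by
    field_simp at hcrit₂; linarith
  -- rewrite Hessian entries
  have hVxx' : Vxx = -(3 * m₁ * (q₁ + 1 / 2) ^ 2 / A ^ ((5:ℝ)/2)
      + 3 * m₂ * (q₁ - 1 / 2) ^ 2 / B ^ ((5:ℝ)/2)) := by
    rw [hVxx, hcrit₁, hcrit₂]; ring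
  have hVyy' : Vyy = -(3 * m₁ * q₂ ^ 2 / A ^ ((5:ℝ)/2)
      + 3 * m₂ * q₂ ^ 2 / B ^ ((5:ℝ)/2)) := by
    rw [hVyy, hcrit₁, hcrit₂]; ring
  have hdet : Vxx * Vyy - Vxy ^ 2 =
      9 * m₁ * m₂ * q₂ ^ 2 / (A ^ ((5:ℝ)/2) * B ^ ((5:ℝ)/2)) := by
    rw [hVxx', hVyy', hVxy]
    field_simp
    ring
  have hdetpos : 0 < Vxx * Vyy - Vxy ^ 2 := by
    rw [hdet]; positivity
  have hVxxneg : Vxx < 0 := by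
    rw [hVxx']
    have h1 : 0 ≤ 3 * m₁ * (q₁ + 1 / 2) ^ 2 / A ^ ((5:ℝ)/2) := by positivity
    have h2 : 0 ≤ 3 * m₂ * (q₁ - 1 / 2) ^ 2 / B ^ ((5:ℝ)/2) := by positivity
    by_cases hx : q₁ + 1 / 2 = 0
    · have hx2 : q₁ - 1 / 2 ≠ 0 := by intro h; apply one_ne_zero (α := ℝ); linarith
      have : 0 < 3 * m₂ * (q₁ - 1 / 2) ^ 2 / B ^ ((5:ℝ)/2) := by positivity
      linarith
    · have : 0 < 3 * m₁ * (q₁ + 1 / 2) ^ 2 / A ^ ((5:ℝ)/2) := by positivity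
      linarith
  have hVyyneg : Vyy < 0 := by
    rw [hVyy']
    have h1 : 0 < 3 * m₁ * q₂ ^ 2 / A ^ ((5:ℝ)/2) := by positivity
    have h2 : 0 < 3 * m₂ * q₂ ^ 2 / B ^ ((5:ℝ)/2) := by positivity
    linarith
  refine ⟨hdet, hdetpos, hVxxneg, hVyyneg, ?_⟩
  -- local max part
  have hcube : ∀ x : ℝ, 0 < x → (Real.sqrt x) ^ 3 = x ^ ((3:ℝ)/2) := by
    intro x hx
    rw [Real.sqrt_eq_rpow, ← Real.rpow_natCast (x ^ ((1:ℝ)/2)) 3, ← Real.rpow_mul hx.le]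
    norm_num
  have hm₁'' : m₁ = ε / 2 * (Real.sqrt A) ^ 3 := by rw [hcube A hA]; exact hm₁'
  have hm₂'' : m₂ = ε / 2 * (Real.sqrt B) ^ 3 := by rw [hcube B hB]; exact hm₂'
  have hdecomp : ∀ q : ℝ × ℝ, 0 < (q.1 + 1/2) ^ 2 + q.2 ^ 2 → 0 < (q.1 - 1/2) ^ 2 + q.2 ^ 2 →
      V q = (-(m₁ / Real.sqrt ((q.1 + 1/2) ^ 2 + q.2 ^ 2))
              - ε / 4 * (Real.sqrt ((q.1 + 1/2) ^ 2 + q.2 ^ 2)) ^ 2)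
          + (-(m₂ / Real.sqrt ((q.1 - 1/2) ^ 2 + q.2 ^ 2))
              - ε / 4 * (Real.sqrt ((q.1 - 1/2) ^ 2 + q.2 ^ 2)) ^ 2) + ε / 8 := by
    intro q hqA hqB
    rw [hV q, Real.sq_sqrt hqA.le, Real.sq_sqrt hqB.le]
    ring
  have hopen : IsOpen {q : ℝ × ℝ | 0 < (q.1 + 1/2) ^ 2 + q.2 ^ 2 ∧ 0 < (q.1 - 1/2) ^ 2 + q.2 ^ 2} := by
    have c1 : Continuous fun q : ℝ × ℝ => (q.1 + 1/2) ^ 2 + q.2 ^ 2 := by fun_prop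
    have c2 : Continuous fun q : ℝ × ℝ => (q.1 - 1/2) ^ 2 + q.2 ^ 2 := by fun_prop
    exact (isOpen_lt continuous_const c1).inter (isOpen_lt continuous_const c2)
  have hmem : (q₁, q₂) ∈ {q : ℝ × ℝ | 0 < (q.1 + 1/2) ^ 2 + q.2 ^ 2 ∧ 0 < (q.1 - 1/2) ^ 2 + q.2 ^ 2} :=
    ⟨hA, hB⟩
  refine Filter.eventually_of_mem (hopen.mem_nhds hmem) ?_
  intro q hq
  obtain ⟨hqA, hqB⟩ := hq
  have hsA : 0 < Real.sqrt A := Real.sqrt_pos.mpr hA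
  have hsB : 0 < Real.sqrt B := Real.sqrt_pos.mpr hB
  have hsqA : 0 < Real.sqrt ((q.1 + 1/2) ^ 2 + q.2 ^ 2) := Real.sqrt_pos.mpr hqA
  have hsqB : 0 < Real.sqrt ((q.1 - 1/2) ^ 2 + q.2 ^ 2) := Real.sqrt_pos.mpr hqB
  have e1 := lagrange_radial_max m₁ ε (Real.sqrt ((q.1 + 1/2) ^ 2 + q.2 ^ 2)) (Real.sqrt A)
    hε hsqA hsA hm₁''
  have e2 := lagrange_radial_max m₂ ε (Real.sqrt ((q.1 - 1/2) ^ 2 + q.2 ^ 2)) (Real.sqrt B)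
    hε hsqB hsB hm₂''
  have hd1 := hdecomp q hqA hqB
  have hd2 := hdecomp (q₁, q₂) hA hB
  simp only at hd2
  rw [hd1, hd2]
  linarith
end

section
/- For the Lagrange problem with equal masses $m_1 = m_2 = m > 0$ and $\epsilon > 0$: the equation $\frac{m}{(x+1/2)^2} - \frac{m}{(x-1/2)^2} - \epsilon x = 0$ on $(-1/2, 1/2)$ has the unique solution $x = 0$, and the critical value there is $V(0) = -4m$. Moreover if $m \geq \epsilon/2$ then $-4m < -2m - \epsilon/8$. -/
open Set

/-- For the Lagrange problem with equal masses `m₁ = m₂ = m`, the inner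
collinear critical point is `x = 0`, with critical value `V 0 = -4m`, and if
`m ≥ ε/2` then `-4m < -2m - ε/8`. -/
theorem lagrange_equal_masses_critical_point
    (m ε : ℝ) (hm : 0 < m) (hε : 0 < ε)
    (V : ℝ → ℝ)
    (hV : ∀ x : ℝ, x ≠ 1 / 2 → x ≠ -(1 / 2) →
      V x = -(m / |x + 1 / 2|) - m / |x - 1 / 2| - ε / 2 * x ^ 2) :
    (∀ x ∈ Ioo (-(1 / 2) : ℝ) (1 / 2),
      (m / (x + 1 / 2) ^ 2 - m / (x - 1 / 2) ^ 2 - ε * x = 0 ↔ x = 0)) ∧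
    V 0 = -4 * m ∧
    (ε / 2 ≤ m → -4 * m < -2 * m - ε / 8) := by
  refine ⟨?_, ?_, ?_⟩
  · intro x hx
    have ha : (0 : ℝ) < x + 1 / 2 := by linarith [hx.1]
    have hb : x - 1 / 2 < 0 := by linarith [hx.2]
    have ha' : x + 1 / 2 ≠ 0 := ne_of_gt ha
    have hb' : x - 1 / 2 ≠ 0 := ne_of_lt hb
    have key : m / (x + 1 / 2) ^ 2 - m / (x - 1 / 2) ^ 2 - ε * x
        = -x * (2 * m / ((x + 1 / 2) ^ 2 * (x - 1 / 2) ^ 2) + ε) := by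
      rw [div_sub_div _ _ (pow_ne_zero 2 ha') (pow_ne_zero 2 hb')]
      ring
    constructor
    · intro h
      rw [key] at h
      have hpos : 0 < 2 * m / ((x + 1 / 2) ^ 2 * (x - 1 / 2) ^ 2) + ε := by
        have h1 : 0 < (x + 1 / 2) ^ 2 * (x - 1 / 2) ^ 2 := by positivity
        have h2 : 0 < 2 * m / ((x + 1 / 2) ^ 2 * (x - 1 / 2) ^ 2) := by positivity
        linarith
      rcases mul_eq_zero.mp h with h' | h'
      · linarith [neg_eq_zero.mp h']
      · exact absurd h' (ne_of_gt hpos)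
    · rintro rfl
      norm_num
  · have h0 := hV 0 (by norm_num) (by norm_num)
    rw [h0, show |(0:ℝ)+1/2| = 1/2 by norm_num, show |(0:ℝ)-1/2| = 1/2 by norm_num]
    ring
  · intro h
    linarith
end
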